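/- The function σ is odd off the integers: σ(−x) = −σ(x) for every x ∈ ℝ ∖ ℤ, and sup_{ℝ} |σ| = 1 + Σ_{n=1}^∞ 1/n². -/

import Mathlib

open Filter Topology

noncomputable section

/-- The defining properties of the function `σ` of Section 3 of the paper:
`σ = −1` on `(−1,0]`, `σ = 1` on `(0,1]`, and for every `n ≥ 0`,
`σ(x) = σ(x + 2·3^n) − 1/(n+1)²` on `(−3^{n+1}, −3^n]` and
`σ(x) = σ(x − 2·3^n) + 1/(n+1)²` on `(3^n, 3^{n+1}]`.
These conditions determine `σ` uniquely on all of `ℝ`. -/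
def SigmaSpec (σ : ℝ → ℝ) : Prop :=
  (∀ x : ℝ, -1 < x → x ≤ 0 → σ x = -1) ∧
  (∀ x : ℝ, 0 < x → x ≤ 1 → σ x = 1) ∧
  (∀ (n : ℕ) (x : ℝ), -(3 : ℝ) ^ (n + 1) < x → x ≤ -(3 : ℝ) ^ n →
    σ x = σ (x + 2 * 3 ^ n) - 1 / ((n : ℝ) + 1) ^ 2) ∧
  (∀ (n : ℕ) (x : ℝ), (3 : ℝ) ^ n < x → x ≤ (3 : ℝ) ^ (n + 1) →
    σ x = σ (x - 2 * 3 ^ n) + 1 / ((n : ℝ) + 1) ^ 2)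
/-- The function `σ` is odd off the integers, and `sup_ℝ |σ| = 1 + Σ_{n=1}^∞ 1/n²`. -/
theorem sigma_odd_and_sup (σ : ℝ → ℝ) (hσ : SigmaSpec σ) :
    (∀ x : ℝ, (¬ ∃ m : ℤ, x = (m : ℝ)) → σ (-x) = -σ x) ∧
    (⨆ x : ℝ, |σ x|) = 1 + ∑' n : ℕ, 1 / ((n : ℝ) + 1) ^ 2 := by
  obtain ⟨h1, h2, h3, h4⟩ := hσ
  have hsum : Summable (fun n : ℕ => 1 / ((n : ℝ) + 1) ^ 2) := by
    have h0 : Summable (fun n : ℕ => 1 / ((n : ℝ)) ^ 2) :=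
      Real.summable_one_div_nat_pow.mpr (by norm_num)
    have h := (summable_nat_add_iff 1).mpr h0
    refine h.congr fun n => ?_
    push_cast
    ring
  set S := ∑' n : ℕ, 1 / ((n : ℝ) + 1) ^ 2 with hS
  have hcpos : ∀ n : ℕ, (0 : ℝ) ≤ 1 / ((n : ℝ) + 1) ^ 2 := fun n => by positivity
  have hsle : ∀ N : ℕ, ∑ k ∈ Finset.range N, 1 / ((k : ℝ) + 1) ^ 2 ≤ S :=
    fun N => hsum.sum_le_tsum _ (fun i _ => hcpos i)
  have hpow : ∀ N : ℕ, (0 : ℝ) < 3 ^ N := fun N => by positivity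
  have hpows : ∀ N : ℕ, (3 : ℝ) ^ (N + 1) = 3 * 3 ^ N := fun N => by ring
  -- oddness on (-3^N, 3^N)
  have odd : ∀ N : ℕ, ∀ x : ℝ, (¬ ∃ m : ℤ, x = (m : ℝ)) →
      -(3 : ℝ) ^ N < x → x < 3 ^ N → σ (-x) = -σ x := by
    intro N
    induction N with
    | zero =>
      intro x hx hlt hgt
      simp only [pow_zero] at hlt hgt
      have hx0 : x ≠ 0 := by
        intro h; exact hx ⟨0, by simpa using h⟩
      rcases lt_or_gt_of_ne hx0 with h | h
      · rw [h1 x hlt h.le, h2 (-x) (by linarith) (by linarith)]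
        norm_num
      · rw [h2 x h hgt.le, h1 (-x) (by linarith) (by linarith)]
    | succ N ih =>
      have pos : ∀ x : ℝ, (¬ ∃ m : ℤ, x = (m : ℝ)) →
          (3 : ℝ) ^ N < x → x < 3 ^ (N + 1) → σ (-x) = -σ x := by
        intro x hx hxl hxr
        have hy : ¬ ∃ m : ℤ, x - 2 * 3 ^ N = (m : ℝ) := by
          rintro ⟨m, hm⟩
          exact hx ⟨m + 2 * 3 ^ N, by push_cast; linarith⟩
        have hyl : -(3 : ℝ) ^ N < x - 2 * 3 ^ N := by linarith
        have hyr : x - 2 * 3 ^ N < 3 ^ N := by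
          have := hpows N; linarith
        have e1 : σ x = σ (x - 2 * 3 ^ N) + 1 / ((N : ℝ) + 1) ^ 2 :=
          h4 N x hxl hxr.le
        have e2 : σ (-x) = σ (-x + 2 * 3 ^ N) - 1 / ((N : ℝ) + 1) ^ 2 :=
          h3 N (-x) (by linarith) (by linarith)
        have e3 : -x + 2 * 3 ^ N = -(x - 2 * 3 ^ N) := by ring
        rw [e2, e3, ih _ hy hyl hyr, e1]
        ring
      intro x hx hlt hgt
      have hne1 : x ≠ 3 ^ N := by
        intro h
        exact hx ⟨3 ^ N, by push_cast [h]; ring⟩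
      have hne2 : x ≠ -(3 ^ N) := by
        intro h
        exact hx ⟨-(3 ^ N), by push_cast [h]; ring⟩
      rcases lt_trichotomy x (3 ^ N) with hxl | hxl | hxl
      · rcases lt_trichotomy x (-(3 ^ N)) with hxm | hxm | hxm
        · -- x < -3^N : apply pos to -x
          have hnx : ¬ ∃ m : ℤ, -x = (m : ℝ) := by
            rintro ⟨m, hm⟩
            exact hx ⟨-m, by push_cast; linarith⟩
          have := pos (-x) hnx (by linarith) (by linarith)
          rw [neg_neg] at this
          linarith
        · exact absurd hxm hne2
        · exact ih x hx (by linarith) hxl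
      · exact absurd hxl hne1
      · exact pos x hx hxl hgt
  -- bound on (-3^N, 3^N]
  have bound : ∀ N : ℕ, ∀ x : ℝ, -(3 : ℝ) ^ N < x → x ≤ 3 ^ N →
      |σ x| ≤ 1 + ∑ k ∈ Finset.range N, 1 / ((k : ℝ) + 1) ^ 2 := by
    intro N
    induction N with
    | zero =>
      intro x hlt hgt
      simp only [pow_zero] at hlt hgt
      simp only [Finset.range_zero, Finset.sum_empty, add_zero]
      rcases le_or_gt x 0 with h | h
      · rw [h1 x hlt h]; norm_num
      · rw [h2 x h hgt]; norm_num
    | succ N ih =>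
      intro x hlt hgt
      rw [Finset.sum_range_succ]
      have h3N := hpows N
      rcases le_or_gt x (-(3 ^ N)) with hxm | hxm
      · have e : σ x = σ (x + 2 * 3 ^ N) - 1 / ((N : ℝ) + 1) ^ 2 :=
          h3 N x hlt hxm
        have hb := ih (x + 2 * 3 ^ N) (by linarith) (by linarith)
        calc |σ x| ≤ |σ (x + 2 * 3 ^ N)| + |1 / ((N : ℝ) + 1) ^ 2| := by
              rw [e]; exact abs_sub _ _
          _ ≤ _ := by rw [abs_of_nonneg (hcpos N)]; linarith
      · rcases le_or_gt x (3 ^ N) with hxl | hxl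
        · have := ih x hxm hxl
          have := hcpos N
          linarith
        · have e : σ x = σ (x - 2 * 3 ^ N) + 1 / ((N : ℝ) + 1) ^ 2 :=
            h4 N x hxl hgt
          have hb := ih (x - 2 * 3 ^ N) (by linarith) (by linarith)
          calc |σ x| ≤ |σ (x - 2 * 3 ^ N)| + |1 / ((N : ℝ) + 1) ^ 2| := by
                rw [e]; exact abs_add_le _ _
            _ ≤ _ := by rw [abs_of_nonneg (hcpos N)]; linarith
  -- global bound
  have bound' : ∀ x : ℝ, |σ x| ≤ 1 + S := by
    intro x
    obtain ⟨N, hN⟩ := pow_unbounded_of_one_lt (R := ℝ) |x| (by norm_num : (1 : ℝ) < 3)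
    obtain ⟨ha, hb⟩ := abs_lt.mp hN
    exact (bound N x ha hb.le).trans (by linarith [hsle N])
  -- value at 3^N
  have peak : ∀ N : ℕ, σ (3 ^ N) = 1 + ∑ k ∈ Finset.range N, 1 / ((k : ℝ) + 1) ^ 2 := by
    intro N
    induction N with
    | zero =>
      simp only [pow_zero, Finset.range_zero, Finset.sum_empty, add_zero]
      exact h2 1 one_pos le_rfl
    | succ N ih =>
      have e : σ ((3 : ℝ) ^ (N + 1)) = σ (3 ^ (N + 1) - 2 * 3 ^ N) + 1 / ((N : ℝ) + 1) ^ 2 :=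
        h4 N (3 ^ (N + 1)) (by rw [hpows N]; nlinarith [hpow N]) le_rfl
      have e2 : (3 : ℝ) ^ (N + 1) - 2 * 3 ^ N = 3 ^ N := by rw [hpows N]; ring
      rw [e, e2, ih, Finset.sum_range_succ]
      ring
  have hbdd : BddAbove (Set.range fun x : ℝ => |σ x|) := by
    refine ⟨1 + S, ?_⟩
    rintro _ ⟨x, rfl⟩
    exact bound' x
  constructor
  · intro x hx
    obtain ⟨N, hN⟩ := pow_unbounded_of_one_lt (R := ℝ) |x| (by norm_num : (1 : ℝ) < 3)
    obtain ⟨ha, hb⟩ := abs_lt.mp hN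
    exact odd N x hx ha hb
  · apply le_antisymm
    · exact ciSup_le bound'
    · have htend : Tendsto (fun N : ℕ => 1 + ∑ k ∈ Finset.range N, 1 / ((k : ℝ) + 1) ^ 2)
          atTop (𝓝 (1 + S)) :=
        (hsum.hasSum.tendsto_sum_nat).const_add 1
      refine le_of_tendsto htend (Filter.Eventually.of_forall fun N => ?_)
      calc 1 + ∑ k ∈ Finset.range N, 1 / ((k : ℝ) + 1) ^ 2 = σ (3 ^ N) := (peak N).symm
        _ ≤ |σ (3 ^ N)| := le_abs_self _
        _ ≤ ⨆ x : ℝ, |σ x| := le_ciSup hbdd _
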